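/- Let f(t) denote the number of self-conjugate partitions in DS(t). Then f(1) = 1, f(2) = 2, f(3) = 3, and f(t) = f(t−1) + f(t−3) for all t ≥ 3 (with the conventions f(0) = f(−1) = 1). -/

import Mathlib

/-- An integer partition, given by its (weakly decreasing, eventually zero)
sequence of parts, indexed from `0`. -/
structure IntPartition where
  parts : ℕ → ℕ
  antitone : ∀ i j, i ≤ j → parts j ≤ parts i
  finite : ∃ N, ∀ i, N ≤ i → parts i = 0

namespace IntPartition

/-- The size of a partition: the sum of its parts. -/
noncomputable def size (lam : IntPartition) : ℕ := ∑ᶠ i, lam.parts i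

/-- The parts of the conjugate partition: `conjParts lam j` is the number of
rows `i` with `lam.parts i > j` (rows and columns are `0`-indexed). -/
noncomputable def conjParts (lam : IntPartition) (j : ℕ) : ℕ :=
  Nat.card {i : ℕ | j < lam.parts i}

/-- A partition is self-conjugate if it equals its conjugate. -/
def IsSelfConjugate (lam : IntPartition) : Prop :=
  ∀ j, lam.conjParts j = lam.parts j

/-- `(i, j)` (both `0`-indexed) is a cell of the Young diagram of `lam`. -/
def IsCell (lam : IntPartition) (i j : ℕ) : Prop := j < lam.parts i

/-- The hook length of the cell `(i, j)` (both `0`-indexed): the number of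
cells directly to the right, plus the number directly below, plus one. -/
noncomputable def hook (lam : IntPartition) (i j : ℕ) : ℕ :=
  (lam.parts i - j) + (lam.conjParts j - i) - 1

/-- A partition is a `t`-core if no hook length is divisible by `t`. -/
def IsCore (lam : IntPartition) (t : ℕ) : Prop :=
  ∀ i j, lam.IsCell i j → ¬ (t ∣ lam.hook i j)

/-- The size of the Durfee square: the largest `k` such that the partition has
at least `k` parts of size at least `k`. -/
noncomputable def durfee (lam : IntPartition) : ℕ :=
  Nat.card {i : ℕ | i < lam.parts i}

/-- A partition has distinct parts if its (nonzero) parts are pairwise different. -/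
def DistinctParts (lam : IntPartition) : Prop :=
  ∀ i j, lam.parts i ≠ 0 → lam.parts j ≠ 0 → i ≠ j → lam.parts i ≠ lam.parts j

/-- The set of main diagonal hook lengths of `lam`. -/
noncomputable def MD (lam : IntPartition) : Set ℕ :=
  {h | ∃ i < lam.durfee, lam.hook i i = h}

/-- `lam ∈ DS(t)`: `lam` is a self-conjugate `(t, t+1)`-core partition whose
first `durfee lam` parts are pairwise distinct. -/
def InDS (lam : IntPartition) (t : ℕ) : Prop :=
  lam.IsSelfConjugate ∧ lam.IsCore t ∧ lam.IsCore (t + 1) ∧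
    ∀ i j, i < lam.durfee → j < lam.durfee → i ≠ j → lam.parts i ≠ lam.parts j

end IntPartition

/-- `fDS t` is the number of partitions in `DS(t)`. -/
noncomputable def fDS (t : ℕ) : ℕ := Nat.card {lam : IntPartition // lam.InDS t}

/-!
A self-conjugate partition `λ` is determined by its set `S` of diagonal hook lengths, which can
be any finite set of odd numbers. The sequence `hᵢ = 2 (λᵢ - i) - 1` is strictly decreasing, its
positive terms are the elements of `S`, and self-conjugacy forces its negative terms to be
exactly the `-b` with `b ∉ S` odd. The hook length of a cell `(i, j)` is `(hᵢ + hⱼ) / 2`, so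
`λ` is an `s`-core iff no two terms have a positive sum divisible by `2s`. For `s = t, t + 1`,
together with the condition on distinct parts (no `a` and `a + 2` both in `S`), this says that
`S ⊆ Q_t` and that no two elements of `S` differ by `2` or sum to `2t` or `2t + 2`. Listing
`Q_t` as `1, 2t - 1, 3, 2t - 3, …` turns these forbidden pairs into positions at distance `1`
or `2`, so `f(t)` counts the subsets of `{0, …, t - 2}` whose elements are at least `3` apart;
splitting on whether the last position is used gives the recurrence.
-/

theorem IsLowerSet.mem_iff_lt_natCard {s : Set ℕ} (hs : IsLowerSet s) (hfin : s.Finite) {x : ℕ} :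
    x ∈ s ↔ x < Nat.card s := by
  obtain h | ⟨n, rfl⟩ := hs.eq_univ_or_Iio
  · exact absurd (h ▸ hfin) Set.infinite_univ
  · simp

def IsSpread (T : Finset ℕ) : Prop := ∀ i ∈ T, ∀ j ∈ T, i ≠ j → i + 3 ≤ j ∨ j + 3 ≤ i

instance : DecidablePred IsSpread := fun T => by
  unfold IsSpread
  infer_instance

def spreadCount (n : ℕ) : ℕ := ((Finset.range n).powerset.filter IsSpread).card

theorem isSpread_insert_iff {n : ℕ} {T : Finset ℕ} (hT : T ⊆ Finset.range n) :
    IsSpread (insert n T) ↔ T ⊆ Finset.range (n - 2) ∧ IsSpread T := by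
  have hlt : ∀ x ∈ T, x < n := fun x hx => Finset.mem_range.mp (hT hx)
  constructor
  · intro h
    refine ⟨fun x hx => ?_, fun x hx y hy => h x (Finset.mem_insert_of_mem hx) y
      (Finset.mem_insert_of_mem hy)⟩
    have := hlt x hx
    have := h x (Finset.mem_insert_of_mem hx) n (Finset.mem_insert_self n T) (by omega)
    rw [Finset.mem_range]
    omega
  · rintro ⟨hsub, h⟩ x hx y hy hxy
    have hfar : ∀ z ∈ T, z + 3 ≤ n := fun z hz => by
      have := Finset.mem_range.mp (hsub hz)
      omega
    rw [Finset.mem_insert] at hx hy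
    rcases hx with rfl | hx <;> rcases hy with rfl | hy
    · exact absurd rfl hxy
    · exact Or.inr (hfar y hy)
    · exact Or.inl (hfar x hx)
    · exact h x hx y hy hxy

theorem spreadCount_succ (n : ℕ) : spreadCount (n + 1) = spreadCount n + spreadCount (n - 2) := by
  have hdisj : Disjoint ((Finset.range n).powerset.filter IsSpread)
      (((Finset.range n).powerset.image (insert n)).filter IsSpread) := by
    refine Finset.disjoint_left.mpr fun T hT hT' => ?_
    simp only [Finset.mem_filter, Finset.mem_powerset, Finset.mem_image] at hT hT'
    obtain ⟨U, -, rfl⟩ := hT'.1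
    exact Finset.notMem_range_self (hT.1 (Finset.mem_insert_self n U))
  have hinj : Set.InjOn (insert n) ((Finset.range n).powerset : Set (Finset ℕ)) :=
    fun U hU V hV h => by
      have hU' : n ∉ U := fun h => Finset.notMem_range_self (Finset.mem_powerset.mp hU h)
      have hV' : n ∉ V := fun h => Finset.notMem_range_self (Finset.mem_powerset.mp hV h)
      rw [← Finset.erase_insert hU', ← Finset.erase_insert hV']
      exact congrArg (·.erase n) h
  rw [spreadCount, Finset.range_add_one, Finset.powerset_insert, Finset.filter_union,
    Finset.card_union_of_disjoint hdisj, Finset.filter_image,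
    Finset.card_image_of_injOn (hinj.mono (Finset.coe_subset.mpr (Finset.filter_subset _ _)))]
  congr 2
  ext T
  simp only [Finset.mem_filter, Finset.mem_powerset]
  constructor
  · rintro ⟨hT, h⟩
    exact (isSpread_insert_iff hT).mp h
  · rintro ⟨hT, h⟩
    have hT' : T ⊆ Finset.range n := hT.trans (Finset.range_subset_range.mpr (by omega))
    exact ⟨hT', (isSpread_insert_iff hT').mpr ⟨hT, h⟩⟩

namespace IntPartition

theorem parts_injective : Function.Injective parts := by
  rintro ⟨_, _, _⟩ ⟨_, _, _⟩ rfl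
  rfl

section Basic

variable (lam : IntPartition)

theorem lt_natCard_setOf_iff {f : ℕ → ℕ} (hf : Monotone f) {i : ℕ} :
    i < Nat.card {i | f i < lam.parts i} ↔ f i < lam.parts i := by
  obtain ⟨N, hN⟩ := lam.finite
  have hlower : IsLowerSet {i | f i < lam.parts i} := fun b a hab hb =>
    (hf hab).trans_lt (hb.trans_le (lam.antitone a b hab))
  have hfin : {i | f i < lam.parts i}.Finite := (Set.finite_Iio N).subset fun i hi => by
    by_contra h
    simp_all [hN i (not_lt.mp h)]
  exact (hlower.mem_iff_lt_natCard hfin).symm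

theorem lt_conjParts_iff {i j : ℕ} : i < lam.conjParts j ↔ j < lam.parts i :=
  lam.lt_natCard_setOf_iff monotone_const

theorem lt_durfee_iff {i : ℕ} : i < lam.durfee ↔ i < lam.parts i :=
  lam.lt_natCard_setOf_iff monotone_id

/-- For a self-conjugate partition and `i < durfee` this is the diagonal hook length
`hook i i`; the later terms are negative. -/
def hookSeq (i : ℕ) : ℤ := 2 * ((lam.parts i : ℤ) - i) - 1

theorem hookSeq_strictAnti : StrictAnti lam.hookSeq :=
  strictAnti_nat_of_succ_lt fun i => by
    have := lam.antitone i (i + 1) i.le_succ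
    simp only [hookSeq]
    omega

/-- `MD(λ)` for self-conjugate `λ`, for which `hook i i = 2 * (parts i - i) - 1`. -/
noncomputable def diagHooks : Finset ℕ :=
  (Finset.range lam.durfee).image fun i => 2 * (lam.parts i - i) - 1

theorem mem_diagHooks {a : ℕ} : a ∈ lam.diagHooks ↔ ∃ i, lam.hookSeq i = a := by
  simp only [diagHooks, Finset.mem_image, Finset.mem_range]
  constructor
  · rintro ⟨i, hi, rfl⟩
    have := lam.lt_durfee_iff.mp hi
    exact ⟨i, by simp only [hookSeq]; omega⟩
  · rintro ⟨i, hi⟩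
    rw [hookSeq] at hi
    have hd : i < lam.durfee := lam.lt_durfee_iff.mpr (by omega)
    exact ⟨i, hd, by omega⟩

theorem odd_of_mem_diagHooks {a : ℕ} (ha : a ∈ lam.diagHooks) : a % 2 = 1 := by
  obtain ⟨i, hi⟩ := lam.mem_diagHooks.mp ha
  simp only [hookSeq] at hi
  omega

end Basic

/-- For a self-conjugate partition with diagonal hooks `S` this is the range of `hookSeq`
(`range_hookSeq`). -/
def extHooks (S : Finset ℕ) : Set ℤ :=
  {x | ∃ a ∈ S, x = a} ∪ {x | ∃ b, b % 2 = 1 ∧ b ∉ S ∧ x = -b}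

theorem natCast_mem_extHooks {S : Finset ℕ} {a : ℕ} (ha : a ∈ S) : (a : ℤ) ∈ extHooks S :=
  Or.inl ⟨a, ha, rfl⟩

theorem neg_mem_extHooks {S : Finset ℕ} {b : ℕ} (hb : b % 2 = 1) (hbS : b ∉ S) :
    -(b : ℤ) ∈ extHooks S :=
  Or.inr ⟨b, hb, hbS, rfl⟩

/-- The self-conjugate partition with diagonal hooks `S` is an `s`-core
(`isCore_iff_isCoreHookSet`). -/
def IsCoreHookSet (s : ℕ) (S : Finset ℕ) : Prop :=
  ∀ x ∈ extHooks S, ∀ y ∈ extHooks S, 0 < x + y → ¬ 2 * (s : ℤ) ∣ x + y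

section SelfConjugate

variable {lam : IntPartition} (hsc : lam.IsSelfConjugate)
include hsc

theorem lt_parts_comm {i j : ℕ} : j < lam.parts i ↔ i < lam.parts j := by
  rw [← lam.lt_conjParts_iff, hsc]

theorem lt_parts_iff_hookSeq {i j : ℕ} :
    j < lam.parts i ↔ 0 < lam.hookSeq i + lam.hookSeq j := by
  have := lt_parts_comm hsc (i := i) (j := j)
  simp only [hookSeq]
  omega

theorem two_mul_hook {i j : ℕ} (h : j < lam.parts i) :
    2 * (lam.hook i j : ℤ) = lam.hookSeq i + lam.hookSeq j := by
  have := (lt_parts_comm hsc).mp h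
  simp only [hook, hookSeq, hsc j]
  omega

theorem isCore_iff_hookSeq (s : ℕ) : lam.IsCore s ↔ ∀ i j,
    0 < lam.hookSeq i + lam.hookSeq j → ¬ 2 * (s : ℤ) ∣ lam.hookSeq i + lam.hookSeq j := by
  refine forall₂_congr fun i j => ?_
  rw [IsCell, lt_parts_iff_hookSeq hsc]
  refine imp_congr_right fun hcell => ?_
  rw [← two_mul_hook hsc ((lt_parts_iff_hookSeq hsc).mpr hcell),
    mul_dvd_mul_iff_left two_ne_zero, Int.natCast_dvd_natCast]

/-- Some `λᵢ` equals `i + a + 1` iff no `λⱼ` equals `j - a`. Let `p` be the number of rows `i`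
with `i + a < λᵢ` and `q` the number of those with `i + a + 1 < λᵢ`: such an `i` exists iff
`q < p`, and, by self-conjugacy, such a `j` exists iff `p ≤ q`. -/
theorem exists_hookSeq_eq_iff (a : ℕ) :
    (∃ i, lam.hookSeq i = 2 * a + 1) ↔ ¬ ∃ j, lam.hookSeq j = -(2 * a + 1) := by
  obtain ⟨p, hp⟩ : ∃ p, ∀ i, i < p ↔ i + a < lam.parts i :=
    ⟨_, fun i => lam.lt_natCard_setOf_iff (monotone_id.add_const a)⟩
  obtain ⟨q, hq⟩ : ∃ q, ∀ i, i < q ↔ i + (a + 1) < lam.parts i :=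
    ⟨_, fun i => lam.lt_natCard_setOf_iff (monotone_id.add_const (a + 1))⟩
  have hqp : q ≤ p := le_of_forall_lt fun i hi => (hp i).mpr (by have := (hq i).mp hi; omega)
  have hpos : (∃ i, lam.hookSeq i = 2 * a + 1) ↔ q < p := by
    simp only [hookSeq]
    constructor
    · rintro ⟨i, hi⟩
      have := hp i
      have := hq i
      omega
    · intro h
      have := (hp q).mp h
      have := (hq q).not.mp (lt_irrefl q)
      exact ⟨q, by omega⟩
  have hneg : (∃ j, lam.hookSeq j = -(2 * a + 1)) ↔ p ≤ q := by
    simp only [hookSeq]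
    constructor
    · rintro ⟨j, hj⟩
      obtain ⟨k, rfl⟩ : ∃ k, j = k + a := ⟨j - a, by omega⟩
      have hpk : ¬ k < p := by
        rw [hp, lt_parts_comm hsc]
        omega
      cases k with
      | zero => omega
      | succ m =>
        have : m < q := by
          rw [hq, show m + (a + 1) = m + 1 + a by omega, ← lt_parts_comm hsc]
          omega
        omega
    · intro h
      refine ⟨p + a, ?_⟩
      have hpp : ¬ p < lam.parts (p + a) := by
        rw [← lt_parts_comm hsc, ← hp]
        exact lt_irrefl p
      rcases Nat.eq_zero_or_pos p with h0 | h0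
      · rw [h0] at hpp ⊢
        omega
      · have : p - 1 < lam.parts (p + a) := by
          rw [← lt_parts_comm hsc, show p + a = p - 1 + (a + 1) by omega, ← hq]
          omega
        omega
  rw [hpos, hneg]
  omega

theorem range_hookSeq : Set.range lam.hookSeq = extHooks lam.diagHooks := by
  ext x
  simp only [Set.mem_range, extHooks, Set.mem_union, Set.mem_ofPred_eq, mem_diagHooks]
  constructor
  · rintro ⟨i, rfl⟩
    have hodd : lam.hookSeq i % 2 = 1 := by
      simp only [hookSeq]
      omega
    rcases lt_or_ge 0 (lam.hookSeq i) with h | h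
    · exact Or.inl ⟨(lam.hookSeq i).toNat, ⟨i, by omega⟩, by omega⟩
    · obtain ⟨a, ha⟩ : ∃ a : ℕ, lam.hookSeq i = -(2 * a + 1) :=
        ⟨(-lam.hookSeq i).toNat / 2, by omega⟩
      refine Or.inr ⟨2 * a + 1, by omega, ?_, by rw [ha]; push_cast; ring⟩
      push_cast
      exact (exists_hookSeq_eq_iff hsc a).not_left.mpr ⟨i, ha⟩
  · rintro (⟨a, ⟨i, hi⟩, rfl⟩ | ⟨b, hb, hbS, rfl⟩)
    · exact ⟨i, hi⟩
    · obtain ⟨a, rfl⟩ : ∃ a, b = 2 * a + 1 := ⟨b / 2, by omega⟩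
      push_cast at hbS ⊢
      by_contra hne
      exact hbS ((exists_hookSeq_eq_iff hsc a).mpr hne)

theorem isCore_iff_isCoreHookSet (s : ℕ) : lam.IsCore s ↔ IsCoreHookSet s lam.diagHooks := by
  rw [isCore_iff_hookSeq hsc, IsCoreHookSet, ← range_hookSeq hsc]
  simp only [Set.forall_mem_range]

end SelfConjugate

theorem distinct_iff_forall_add_two_notMem (lam : IntPartition) :
    (∀ i j, i < lam.durfee → j < lam.durfee → i ≠ j → lam.parts i ≠ lam.parts j) ↔
      ∀ a ∈ lam.diagHooks, a + 2 ∉ lam.diagHooks := by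
  simp only [mem_diagHooks]
  constructor
  · rintro hd a ⟨i, hi⟩ ⟨j, hj⟩
    have hji : j < i := lam.hookSeq_strictAnti.lt_iff_gt.mp (by push_cast at hj; omega)
    have := lam.antitone j i hji.le
    simp only [hookSeq] at hi hj
    exact hd i j (lam.lt_durfee_iff.mpr (by omega)) (lam.lt_durfee_iff.mpr (by omega))
      hji.ne' (by omega)
  · intro hnd i j hi hj hij heq
    wlog hlt : i < j generalizing i j
    · exact this j i hj hi hij.symm heq.symm (by omega)
    have h1 := lam.antitone i (i + 1) (by omega)
    have h2 := lam.antitone (i + 1) j hlt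
    have h3 := lam.lt_durfee_iff.mp (show i + 1 < lam.durfee by omega)
    refine hnd (lam.hookSeq (i + 1)).toNat ⟨i + 1, ?_⟩ ⟨i, ?_⟩ <;>
      simp only [hookSeq] <;> push_cast <;> omega

-- Taking `a = b` excludes `t` and `t + 1`, and for odd numbers `b ≠ a + 2` says that distinct
-- elements differ by at least `4`: this is the paper's description of `MD(λ)` for `λ ∈ DS(t)`.
def IsDSHookSet (t : ℕ) (S : Finset ℕ) : Prop :=
  (∀ a ∈ S, a % 2 = 1 ∧ a < 2 * t) ∧
    ∀ a ∈ S, ∀ b ∈ S, a + b ≠ 2 * t ∧ a + b ≠ 2 * t + 2 ∧ b ≠ a + 2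

theorem isCoreHookSet_of_lt {s : ℕ} {S : Finset ℕ} (hlt : ∀ a ∈ S, a < 2 * s)
    (hsum : ∀ a ∈ S, ∀ b ∈ S, a + b ≠ 2 * s) : IsCoreHookSet s S := by
  rintro _ (⟨a, ha, rfl⟩ | ⟨a, -, -, rfl⟩) _ (⟨b, hb, rfl⟩ | ⟨b, -, -, rfl⟩) hpos hdvd
  · have := hlt a ha
    have := hlt b hb
    refine hsum a ha b hb (Nat.eq_of_dvd_of_lt_two_mul (by omega) ?_ (by omega))
    exact_mod_cast hdvd
  · have := Int.le_of_dvd hpos hdvd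
    have := hlt a ha
    omega
  · have := Int.le_of_dvd hpos hdvd
    have := hlt b hb
    omega
  · omega

theorem lt_two_mul_of_isCoreHookSet {t : ℕ} (ht : 1 ≤ t) {S : Finset ℕ}
    (hodd : ∀ a ∈ S, a % 2 = 1) (hcore : IsCoreHookSet t S) (hcore' : IsCoreHookSet (t + 1) S)
    (hgap : ∀ a ∈ S, a + 2 ∉ S) {a : ℕ} (ha : a ∈ S) : a < 2 * t := by
  by_contra! hge
  have := hodd a ha
  have mem_of_eq : ∀ s b, IsCoreHookSet s S → b < a → b % 2 = 1 → a = b + 2 * s → b ∈ S := by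
    intro s b hs hba hb hab
    by_contra hbS
    exact hs a (natCast_mem_extHooks ha) (-b) (neg_mem_extHooks hb hbS) (by omega) ⟨1, by omega⟩
  have h1 : a - 2 * t ∈ S := mem_of_eq t _ hcore (by omega) (by omega) (by omega)
  by_cases h : a = 2 * t + 1
  · exact hcore' a (natCast_mem_extHooks ha) _ (natCast_mem_extHooks h1) (by omega)
      ⟨1, by push_cast; omega⟩
  · have h2 : a - 2 * t - 2 ∈ S := mem_of_eq (t + 1) _ hcore' (by omega) (by omega) (by omega)
    exact hgap _ h2 (by rwa [show a - 2 * t - 2 + 2 = a - 2 * t by omega])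

theorem isDSHookSet_iff {t : ℕ} (ht : 1 ≤ t) {S : Finset ℕ} (hodd : ∀ a ∈ S, a % 2 = 1) :
    IsDSHookSet t S ↔ IsCoreHookSet t S ∧ IsCoreHookSet (t + 1) S ∧ ∀ a ∈ S, a + 2 ∉ S := by
  constructor
  · rintro ⟨hlt, hpair⟩
    refine ⟨isCoreHookSet_of_lt (fun a ha => (hlt a ha).2) fun a ha b hb => (hpair a ha b hb).1,
      isCoreHookSet_of_lt (fun a ha => by have := (hlt a ha).2; omega) fun a ha b hb => ?_,
      fun a ha hb => (hpair a ha _ hb).2.2 rfl⟩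
    have := (hpair a ha b hb).2.1
    omega
  · rintro ⟨hcore, hcore', hgap⟩
    refine ⟨fun a ha => ⟨hodd a ha, lt_two_mul_of_isCoreHookSet ht hodd hcore hcore' hgap ha⟩,
      fun a ha b hb => ⟨fun h => ?_, fun h => ?_, ?_⟩⟩
    · exact hcore a (natCast_mem_extHooks ha) b (natCast_mem_extHooks hb) (by omega)
        ⟨1, by omega⟩
    · exact hcore' a (natCast_mem_extHooks ha) b (natCast_mem_extHooks hb) (by omega)
        ⟨1, by omega⟩
    · rintro rfl
      exact hgap a ha hb

theorem inDS_iff {t : ℕ} (ht : 1 ≤ t) {lam : IntPartition} :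
    lam.InDS t ↔ lam.IsSelfConjugate ∧ IsDSHookSet t lam.diagHooks :=
  and_congr_right fun hsc => by
    rw [isDSHookSet_iff ht fun _ => lam.odd_of_mem_diagHooks, ← isCore_iff_isCoreHookSet hsc,
      ← isCore_iff_isCoreHookSet hsc, distinct_iff_forall_add_two_notMem]

def countGE (S : Finset ℕ) (m : ℕ) : ℕ := (S.filter (m ≤ ·)).card

theorem countGE_antitone (S : Finset ℕ) : Antitone (countGE S) := fun _ _ h =>
  Finset.card_le_card fun _ ha => by
    rw [Finset.mem_filter] at ha ⊢
    exact ⟨ha.1, h.trans ha.2⟩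

theorem countGE_eq (S : Finset ℕ) (m : ℕ) :
    countGE S m = countGE S (m + 1) + if m ∈ S then 1 else 0 := by
  rw [countGE, countGE, Finset.card_filter, Finset.card_filter,
    ← Finset.sum_ite_eq' S m fun _ => 1, ← Finset.sum_add_distrib]
  exact Finset.sum_congr rfl fun a _ => by split_ifs <;> omega

theorem countGE_two_mul {S : Finset ℕ} (hodd : ∀ a ∈ S, a % 2 = 1) (k : ℕ) :
    countGE S (2 * k) = countGE S (2 * k + 1) := by
  rw [countGE_eq, if_neg fun h => by have := hodd _ h; omega, add_zero]

-- Listing `S` decreasingly as `h₀ > h₁ > ⋯`, the self-conjugate partition with diagonal hooks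
-- `S` has the cell `(i, j)`, `i ≤ j`, iff `2 (j - i) + 1 ≤ hᵢ`, i.e. iff at least `i + 1`
-- elements of `S` are `≥ 2 (j - i) + 1`.
def HookCell (S : Finset ℕ) (i j : ℕ) : Prop :=
  min i j < countGE S (2 * (max i j - min i j) + 1)

section HookCell

variable {S : Finset ℕ} {i j : ℕ}

theorem hookCell_comm : HookCell S i j ↔ HookCell S j i := by
  rw [HookCell, HookCell, min_comm, max_comm]

theorem HookCell.max_lt (h : HookCell S i j) : max i j < S.card + S.sup id := by
  have hcard : countGE S (2 * (max i j - min i j) + 1) ≤ S.card := Finset.card_filter_le _ _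
  obtain ⟨a, ha⟩ := Finset.card_pos.mp (Nat.zero_lt_of_lt h)
  rw [Finset.mem_filter] at ha
  have := Finset.le_sup (f := id) ha.1
  simp only [HookCell, id] at h this
  omega

variable (hodd : ∀ a ∈ S, a % 2 = 1)
include hodd

theorem HookCell.of_succ (h : HookCell S i (j + 1)) : HookCell S i j := by
  unfold HookCell at h ⊢
  rcases lt_or_ge j i with hji | hij
  · rw [min_eq_right hji.le, max_eq_left hji.le]
    rw [min_eq_right hji, max_eq_left hji,
      show 2 * (i - (j + 1)) + 1 = 2 * (i - j) - 1 by omega] at h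
    have e1 := countGE_eq S (2 * (i - j) - 1)
    have e2 := countGE_two_mul hodd (i - j)
    rw [show 2 * (i - j) - 1 + 1 = 2 * (i - j) by omega] at e1
    split_ifs at e1 <;> omega
  · rw [min_eq_left hij, max_eq_right hij]
    rw [min_eq_left (by omega), max_eq_right (by omega)] at h
    exact h.trans_le (countGE_antitone S (by omega))

theorem hookCell_antitone (i : ℕ) : Antitone (HookCell S i) :=
  antitone_nat_of_succ_le fun _ => HookCell.of_succ hodd

theorem lt_natCard_hookCell_iff : j < Nat.card {j | HookCell S i j} ↔ HookCell S i j := by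
  have hfin : {j | HookCell S i j}.Finite :=
    (Set.finite_Iio _).subset fun j h => (le_max_right i j).trans_lt (HookCell.max_lt h)
  exact ((isLowerSet_setOfPred.mpr (hookCell_antitone hodd i)).mem_iff_lt_natCard hfin).symm

end HookCell

noncomputable def ofDiagHooks (S : Finset ℕ) (hodd : ∀ a ∈ S, a % 2 = 1) : IntPartition where
  parts i := Nat.card {j | HookCell S i j}
  antitone i i' hi := le_of_forall_lt fun k hk => by
    rw [lt_natCard_hookCell_iff hodd, hookCell_comm] at hk ⊢
    exact hookCell_antitone hodd k hi hk
  finite := ⟨S.card + S.sup id, fun i hi => Nat.eq_zero_of_not_pos fun hpos =>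
    (((lt_natCard_hookCell_iff hodd).mp hpos).max_lt.trans_le hi).not_ge (le_max_left i 0)⟩

section OfDiagHooks

variable {S : Finset ℕ} (hodd : ∀ a ∈ S, a % 2 = 1) {i j : ℕ}

theorem lt_ofDiagHooks_parts_iff : j < (ofDiagHooks S hodd).parts i ↔ HookCell S i j :=
  lt_natCard_hookCell_iff hodd

theorem isSelfConjugate_ofDiagHooks : (ofDiagHooks S hodd).IsSelfConjugate := fun j =>
  eq_of_forall_lt_iff fun i => by
    rw [lt_conjParts_iff, lt_ofDiagHooks_parts_iff, lt_ofDiagHooks_parts_iff, hookCell_comm]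

theorem lt_ofDiagHooks_parts_sub_iff {m : ℕ} :
    m < (ofDiagHooks S hodd).parts i - i ↔ i < countGE S (2 * m + 1) := by
  rw [Nat.lt_sub_iff_add_lt', lt_ofDiagHooks_parts_iff, HookCell, min_eq_left (by omega),
    max_eq_right (by omega), Nat.add_sub_cancel_left]

theorem diagHooks_ofDiagHooks : (ofDiagHooks S hodd).diagHooks = S := by
  ext a
  rw [mem_diagHooks]
  constructor
  · rintro ⟨i, hi⟩
    obtain ⟨k, hk⟩ : ∃ k, (ofDiagHooks S hodd).parts i - i = k := ⟨_, rfl⟩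
    have ha : a + 1 = 2 * k := by simp only [hookSeq] at hi; omega
    have h1 : i < countGE S (2 * k - 1) := by
      rw [show 2 * k - 1 = 2 * (k - 1) + 1 by omega, ← lt_ofDiagHooks_parts_sub_iff hodd]
      omega
    have h2 : ¬ i < countGE S (2 * k + 1) := by
      rw [← lt_ofDiagHooks_parts_sub_iff hodd]
      omega
    have e1 := countGE_eq S (2 * k - 1)
    have e2 := countGE_two_mul hodd k
    rw [show 2 * k - 1 + 1 = 2 * k by omega] at e1
    split_ifs at e1 with hmem
    · rwa [show a = 2 * k - 1 by omega]
    · omega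
  · intro ha
    have hodd_a := hodd a ha
    set i := countGE S (a + 1)
    have hi : countGE S a = i + 1 := by rw [countGE_eq, if_pos ha]
    have hk : (ofDiagHooks S hodd).parts i - i = (a + 1) / 2 := eq_of_forall_lt_iff fun m => by
      rw [lt_ofDiagHooks_parts_sub_iff]
      constructor
      · intro h
        by_contra! hm
        have := countGE_antitone S (show a + 1 ≤ 2 * m + 1 by omega)
        omega
      · intro hm
        have := countGE_antitone S (show 2 * m + 1 ≤ a by omega)
        omega
    exact ⟨i, by simp only [hookSeq]; omega⟩

end OfDiagHooks

theorem eq_of_diagHooks_eq {lam mu : IntPartition} (hlam : lam.IsSelfConjugate)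
    (hmu : mu.IsSelfConjugate) (h : lam.diagHooks = mu.diagHooks) : lam = mu := by
  have hrange : Set.range (OrderDual.toDual ∘ lam.hookSeq) =
      Set.range (OrderDual.toDual ∘ mu.hookSeq) := by
    rw [Set.range_comp, Set.range_comp, range_hookSeq hlam, range_hookSeq hmu, h]
  have hseq := (lam.hookSeq_strictAnti.dual_right.range_inj mu.hookSeq_strictAnti.dual_right).mp
    hrange
  refine parts_injective (funext fun i => ?_)
  have := congrFun hseq i
  simp only [Function.comp_apply, OrderDual.toDual_inj, hookSeq] at this
  omega

theorem IsDSHookSet.mem {t : ℕ} {S : Finset ℕ} (h : IsDSHookSet t S) {a : ℕ} (ha : a ∈ S) :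
    a % 2 = 1 ∧ a < 2 * t ∧ a ≠ t ∧ a ≠ t + 1 := by
  have := h.1 a ha
  have := h.2 a ha a ha
  omega

theorem IsDSHookSet.odd {t : ℕ} {S : Finset ℕ} (h : IsDSHookSet t S) : ∀ a ∈ S, a % 2 = 1 :=
  fun a ha => (h.1 a ha).1

-- `Q_t = {1, 3, …, 2t - 1} \ {t, t + 1}` listed as `1, 2t - 1, 3, 2t - 3, 5, …`: two of its
-- elements form a pair forbidden in `IsDSHookSet` iff their positions differ by `1` or `2`.
def qLabel (t i : ℕ) : ℕ := if i % 2 = 0 then i + 1 else 2 * t - i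

def qIndex (t a : ℕ) : ℕ := if a < t then a - 1 else 2 * t - a

noncomputable def dsHookSetEquiv (t : ℕ) :
    {S // IsDSHookSet t S} ≃ ((Finset.range (t - 1)).powerset.filter IsSpread) where
  toFun S := ⟨S.1.image (qIndex t), by
    simp only [Finset.mem_filter, Finset.mem_powerset]
    refine ⟨fun i hi => ?_, fun i hi j hj hij => ?_⟩
    · obtain ⟨a, ha, rfl⟩ := Finset.mem_image.mp hi
      have := S.2.mem ha
      rw [Finset.mem_range, qIndex]
      split_ifs <;> omega
    · obtain ⟨a, ha, rfl⟩ := Finset.mem_image.mp hi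
      obtain ⟨b, hb, rfl⟩ := Finset.mem_image.mp hj
      have := S.2.mem ha
      have := S.2.mem hb
      have := S.2.2 a ha b hb
      have := S.2.2 b hb a ha
      simp only [qIndex] at hij ⊢
      split_ifs at hij ⊢ <;> omega⟩
  invFun T := ⟨T.1.image (qLabel t), by
    have hT := Finset.mem_filter.mp T.2
    have hlt : ∀ i ∈ T.1, i < t - 1 := fun i hi =>
      Finset.mem_range.mp (Finset.mem_powerset.mp hT.1 hi)
    refine ⟨fun a ha => ?_, fun a ha b hb => ?_⟩
    · obtain ⟨i, hi, rfl⟩ := Finset.mem_image.mp ha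
      have := hlt i hi
      simp only [qLabel]
      split_ifs <;> omega
    · obtain ⟨i, hi, rfl⟩ := Finset.mem_image.mp ha
      obtain ⟨j, hj, rfl⟩ := Finset.mem_image.mp hb
      have := hlt i hi
      have := hlt j hj
      have : i = j ∨ i + 3 ≤ j ∨ j + 3 ≤ i := by
        by_cases hij : i = j
        · exact Or.inl hij
        · exact Or.inr (hT.2 i hi j hj hij)
      simp only [qLabel]
      split_ifs <;> omega⟩
  left_inv S := Subtype.ext <| by
    simp only [Finset.image_image]
    refine (Finset.image_congr fun a ha => ?_).trans S.1.image_id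
    have := S.2.mem ha
    simp only [Function.comp_apply, qIndex, qLabel, id]
    split_ifs <;> omega
  right_inv T := Subtype.ext <| by
    simp only [Finset.image_image]
    refine (Finset.image_congr fun i hi => ?_).trans T.1.image_id
    have := Finset.mem_range.mp (Finset.mem_powerset.mp (Finset.mem_filter.mp T.2).1 hi)
    simp only [Function.comp_apply, qIndex, qLabel, id]
    split_ifs <;> omega

theorem natCard_isDSHookSet (t : ℕ) : Nat.card {S // IsDSHookSet t S} = spreadCount (t - 1) := by
  rw [Nat.card_congr (dsHookSetEquiv t), Nat.card_eq_finsetCard, spreadCount]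

noncomputable def inDSEquiv {t : ℕ} (ht : 1 ≤ t) :
    {lam : IntPartition // lam.InDS t} ≃ {S // IsDSHookSet t S} where
  toFun lam := ⟨lam.1.diagHooks, ((inDS_iff ht).mp lam.2).2⟩
  invFun S := ⟨ofDiagHooks S.1 S.2.odd, (inDS_iff ht).mpr
    ⟨isSelfConjugate_ofDiagHooks S.2.odd, by rw [diagHooks_ofDiagHooks]; exact S.2⟩⟩
  left_inv lam := by
    obtain ⟨hsc, h⟩ := (inDS_iff ht).mp lam.2
    exact Subtype.ext <| eq_of_diagHooks_eq (isSelfConjugate_ofDiagHooks h.odd) hsc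
      (diagHooks_ofDiagHooks h.odd)
  right_inv S := Subtype.ext (diagHooks_ofDiagHooks S.2.odd)

end IntPartition

theorem fDS_zero : fDS 0 = 1 := by
  have hempty : ∀ a ∈ (∅ : Finset ℕ), a % 2 = 1 := by simp
  set ε := IntPartition.ofDiagHooks ∅ hempty
  have hcell : ∀ i j, ¬ j < ε.parts i := fun i j => by
    simp [ε, IntPartition.lt_ofDiagHooks_parts_iff, IntPartition.HookCell, IntPartition.countGE]
  rw [fDS, Nat.card_eq_one_iff_exists]
  refine ⟨⟨ε, IntPartition.isSelfConjugate_ofDiagHooks hempty, fun i j h => absurd h (hcell i j),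
    fun i j h => absurd h (hcell i j), fun i _ hi => absurd (ε.lt_durfee_iff.mp hi) (hcell i i)⟩,
    fun ⟨lam, hlam⟩ => Subtype.ext (IntPartition.parts_injective (funext fun i => ?_))⟩
  exact eq_of_forall_lt_iff fun j =>
    iff_of_false (fun h => hlam.2.2.1 i j h (one_dvd _)) (hcell i j)

theorem fDS_eq_spreadCount (t : ℕ) : fDS t = spreadCount (t - 1) := by
  rcases Nat.eq_zero_or_pos t with rfl | ht
  · exact fDS_zero.trans (by decide)
  · rw [fDS, Nat.card_congr (IntPartition.inDSEquiv ht), IntPartition.natCard_isDSHookSet]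

/-- `f(1) = 1`, `f(2) = 2`, `f(3) = 3`, and `f(t) = f(t-1) + f(t-3)` for `t ≥ 3`. -/
theorem fDS_recurrence :
    fDS 1 = 1 ∧ fDS 2 = 2 ∧ fDS 3 = 3 ∧
      ∀ t : ℕ, 3 ≤ t → fDS t = fDS (t - 1) + fDS (t - 3) := by
  simp only [fDS_eq_spreadCount]
  refine ⟨by decide, by decide, by decide, fun t ht => ?_⟩
  obtain ⟨n, rfl⟩ := Nat.exists_eq_add_of_le' ht
  simpa using spreadCount_succ (n + 1)
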